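/- arXiv:0812.0075 — 6 statements merged into one kernel-verified Lean document; each statement's English description precedes it below -/
import Mathlib

section
/- For every real number R in (0,1) there exists α > 0 (depending only on R) such that for all r in [0,1], max{R^α, r^α} ≥ (R + r)/(1 + R·r). -/
theorem stmt0 (R : ℝ) (hR0 : 0 < R) (hR1 : R < 1) :
    ∃ α : ℝ, 0 < α ∧ ∀ r : ℝ, 0 ≤ r → r ≤ 1 →
      (R + r) / (1 + R * r) ≤ max (R ^ α) (r ^ α) := by
  set α := R * (1 - R) / (1 + R) with hαdef
  have hα : 0 < α := div_pos (mul_pos hR0 (by linarith)) (by linarith)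
  have hRne : R ≠ 0 := hR0.ne'
  have h1Rpos : (0:ℝ) < 1 + R := by linarith
  have h1Rne : (1:ℝ) + R ≠ 0 := h1Rpos.ne'
  refine ⟨α, hα, fun r hr0 hr1 => ?_⟩
  have hden : (0:ℝ) < 1 + R * r := by nlinarith
  rcases le_total r R with h | h
  · -- use R ^ α
    refine le_trans ?_ (le_max_left _ _)
    have hlog : 1 - R⁻¹ ≤ Real.log R := Real.one_sub_inv_le_log_of_pos hR0
    have hexp : 1 + α * Real.log R ≤ R ^ α := by
      rw [Real.rpow_def_of_pos hR0]
      have := Real.add_one_le_exp (α * Real.log R)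
      rw [mul_comm (Real.log R)]
      linarith
    have h2 : α * (1 - R⁻¹) ≤ α * Real.log R :=
      mul_le_mul_of_nonneg_left hlog hα.le
    have heq : α * (1 - R⁻¹) = -((1 - R)^2 / (1 + R)) := by
      rw [hαdef]; field_simp; ring
    have hkey : 1 - (1 - R)^2 / (1 + R) ≤ R ^ α := by nlinarith
    have hfr2 : (R + r) / (1 + R * r) ≤ 2 * R / (1 + R^2) := by
      rw [div_le_div_iff₀ hden (by positivity)]
      nlinarith [mul_nonneg (sub_nonneg.2 h) (by nlinarith : (0:ℝ) ≤ 1 - R^2)]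
    have h1R : (1 - R)^2 / (1 + R) ≤ (1 - R)^2 / (1 + R^2) := by
      apply div_le_div_of_nonneg_left (by positivity) (by nlinarith) (by nlinarith)
    have h2R : 2 * R / (1 + R^2) = 1 - (1 - R)^2 / (1 + R^2) := by
      field_simp; ring
    calc (R + r) / (1 + R * r) ≤ 2 * R / (1 + R^2) := hfr2
      _ = 1 - (1 - R)^2 / (1 + R^2) := h2R
      _ ≤ 1 - (1 - R)^2 / (1 + R) := by linarith
      _ ≤ R ^ α := hkey
  · -- use r ^ α, r ≥ R > 0
    refine le_trans ?_ (le_max_right _ _)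
    have hr0' : 0 < r := lt_of_lt_of_le hR0 h
    have hlog : 1 - r⁻¹ ≤ Real.log r := Real.one_sub_inv_le_log_of_pos hr0'
    have hexp : 1 + α * Real.log r ≤ r ^ α := by
      rw [Real.rpow_def_of_pos hr0']
      have := Real.add_one_le_exp (α * Real.log r)
      rw [mul_comm (Real.log r)]
      linarith
    have h2 : α * (1 - r⁻¹) ≤ α * Real.log r :=
      mul_le_mul_of_nonneg_left hlog hα.le
    have hinv : α * (1 - r⁻¹) = -(α * (1 - r) / r) := by
      field_simp; ring
    have hkey : 1 - α * (1 - r) / r ≤ r ^ α := by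
      rw [hinv] at h2; nlinarith
    rw [div_le_iff₀ hden]
    have hstep : α * (1 - r) / r ≤ (1 - r) * (1 - R) / (1 + R * r) := by
      rw [hαdef, div_le_div_iff₀ hr0' hden, div_mul_eq_mul_div, div_mul_eq_mul_div,
        div_le_iff₀ h1Rpos]
      nlinarith [mul_nonneg (mul_nonneg (sub_nonneg.2 hr1) (sub_nonneg.2 hR1.le))
        (by nlinarith [mul_nonneg (mul_nonneg hR0.le hr0) (sub_nonneg.2 hR1.le)] : (0:ℝ) ≤ r - R + R * r * (1 - R))]
    have hfr : R + r = (1 - (1 - r) * (1 - R) / (1 + R * r)) * (1 + R * r) := by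
      field_simp; ring
    rw [hfr]
    apply mul_le_mul_of_nonneg_right _ hden.le
    linarith [hstep, hkey]
end

section
/- Fix α with 0 < α < 1. The function f(r) = (r^α − r)/(1 − r^(α+1)) is non-decreasing on the interval (0,1). -/
open Real Set

private lemma amgm_aux (α x : ℝ) (hα0 : 0 < α) (hα1 : α < 1) (hx : 0 ≤ x) :
    2 * x ^ (α + 1) ≤ (1 - α) + (1 + α) * x ^ 2 := by
  have h := Real.geom_mean_le_arith_mean2_weighted (w₁ := (1 + α) / 2) (w₂ := (1 - α) / 2)
    (p₁ := x ^ 2) (p₂ := 1) (by linarith) (by linarith) (by positivity) zero_le_one (by ring)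
  have h2 : (x ^ 2) ^ ((1 + α) / 2) = x ^ (α + 1) := by
    rw [← Real.rpow_natCast x 2, ← Real.rpow_mul hx]
    congr 1
    push_cast
    ring
  rw [h2, Real.one_rpow, mul_one] at h
  linarith

private lemma g_nonneg_aux (α : ℝ) (hα0 : 0 < α) (hα1 : α < 1) (x : ℝ) (hx : 0 < x)
    (hx1 : x ≤ 1) :
    0 ≤ α * x ^ (α - 1) + x ^ (2 * α) - α * x ^ (α + 1) - 1 := by
  set g : ℝ → ℝ := fun y => α * y ^ (α - 1) + y ^ (2 * α) - α * y ^ (α + 1) - 1 with hg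
  have hder : ∀ y : ℝ, y ≠ 0 → HasDerivAt g
      (α * ((α - 1) * y ^ (α - 1 - 1)) + (2 * α) * y ^ (2 * α - 1)
        - α * ((α + 1) * y ^ (α + 1 - 1))) y := by
    intro y hy
    exact ((((Real.hasDerivAt_rpow_const (p := α - 1) (Or.inl hy)).const_mul α).add
      (Real.hasDerivAt_rpow_const (p := 2 * α) (Or.inl hy))).sub
      ((Real.hasDerivAt_rpow_const (p := α + 1) (Or.inl hy)).const_mul α)).sub_const 1
  have key : AntitoneOn g (Icc x 1) := by
    apply antitoneOn_of_deriv_nonpos (convex_Icc x 1)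
    · intro y hy
      exact (hder y (lt_of_lt_of_le hx hy.1).ne').continuousAt.continuousWithinAt
    · rw [interior_Icc]
      intro y hy
      exact (hder y (lt_trans hx hy.1).ne').differentiableAt.differentiableWithinAt
    · rw [interior_Icc]
      intro y hy
      have hy0 : 0 < y := lt_trans hx hy.1
      rw [(hder y hy0.ne').deriv]
      have ht : 0 < y ^ (α - 1 - 1) := Real.rpow_pos_of_pos hy0 _
      have e1 : y ^ (2 * α - 1) = y ^ (α - 1 - 1) * y ^ (α + 1) := by
        rw [← Real.rpow_add hy0]; ring_nf
      have e2 : y ^ (α + 1 - 1) = y ^ (α - 1 - 1) * y ^ (2 : ℝ) := by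
        rw [← Real.rpow_add hy0]; ring_nf
      have e3 : y ^ (2 : ℝ) = y ^ 2 := by
        rw [show (2 : ℝ) = ((2 : ℕ) : ℝ) by norm_num, Real.rpow_natCast]
      have ham := amgm_aux α y hα0 hα1 hy0.le
      rw [e1, e2, e3]
      nlinarith [mul_nonneg (mul_pos hα0 ht).le
        (by linarith : (0:ℝ) ≤ (1 - α) + (1 + α) * y ^ 2 - 2 * y ^ (α + 1))]
  have h1 : g 1 = 0 := by simp [hg]
  have := key (show x ∈ Icc x 1 from ⟨le_refl x, hx1⟩) (show (1:ℝ) ∈ Icc x 1 from ⟨hx1, le_refl 1⟩) hx1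
  rw [h1] at this
  exact this

theorem stmt2 (α : ℝ) (hα0 : 0 < α) (hα1 : α < 1) (r s : ℝ)
    (hr : 0 < r) (hrs : r ≤ s) (hs : s < 1) :
    (r ^ α - r) / (1 - r ^ (α + 1)) ≤ (s ^ α - s) / (1 - s ^ (α + 1)) := by
  set f : ℝ → ℝ := fun x => (x ^ α - x) / (1 - x ^ (α + 1)) with hf
  have hpos : ∀ x : ℝ, 0 < x → x < 1 → 0 < 1 - x ^ (α + 1) := by
    intro x hx hx1
    have : x ^ (α + 1) < 1 := Real.rpow_lt_one hx.le hx1 (by linarith)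
    linarith
  have hder : ∀ x : ℝ, 0 < x → x < 1 → HasDerivAt f
      (((α * x ^ (α - 1) - 1) * (1 - x ^ (α + 1))
        - (x ^ α - x) * (-((α + 1) * x ^ (α + 1 - 1)))) / (1 - x ^ (α + 1)) ^ 2) x := by
    intro x hx hx1
    have hu : HasDerivAt (fun y : ℝ => y ^ α - y) (α * x ^ (α - 1) - 1) x := by
      exact (Real.hasDerivAt_rpow_const (p := α) (Or.inl hx.ne')).sub (hasDerivAt_id x)
    have hv : HasDerivAt (fun y : ℝ => 1 - y ^ (α + 1)) (-((α + 1) * x ^ (α + 1 - 1))) x :=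
      (Real.hasDerivAt_rpow_const (p := α + 1) (Or.inl hx.ne')).const_sub 1
    exact hu.div hv (hpos x hx hx1).ne'
  have hmono : MonotoneOn f (Icc r s) := by
    apply monotoneOn_of_deriv_nonneg (convex_Icc r s)
    · intro x hx
      exact (hder x (lt_of_lt_of_le hr hx.1) (lt_of_le_of_lt hx.2 hs)).continuousAt.continuousWithinAt
    · rw [interior_Icc]
      intro x hx
      exact (hder x (lt_trans hr hx.1) (lt_trans hx.2 hs)).differentiableAt.differentiableWithinAt
    · rw [interior_Icc]
      intro x hx
      have hx0 : 0 < x := lt_trans hr hx.1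
      have hx1 : x < 1 := lt_trans hx.2 hs
      rw [(hder x hx0 hx1).deriv]
      apply div_nonneg _ (sq_nonneg _)
      have e1 : x ^ (α - 1) * x ^ (α + 1) = x ^ (2 * α) := by
        rw [← Real.rpow_add hx0]; ring_nf
      have e2 : x ^ α * x ^ α = x ^ (2 * α) := by
        rw [← Real.rpow_add hx0]; ring_nf
      have e3 : x ^ (α + 1) = x ^ α * x := Real.rpow_add_one hx0.ne' α
      have e4 : x ^ (α + 1 - 1) = x ^ α := by norm_num
      rw [e4]
      have hN : (α * x ^ (α - 1) - 1) * (1 - x ^ (α + 1))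
          - (x ^ α - x) * (-((α + 1) * x ^ α))
          = α * x ^ (α - 1) + x ^ (2 * α) - α * x ^ (α + 1) - 1 := by
        linear_combination (-α) * e1 + (α + 1) * e2 + (α + 1) * e3
      rw [hN]
      exact g_nonneg_aux α hα0 hα1 x hx0 hx1.le
  exact hmono ⟨le_refl r, hrs⟩ ⟨hrs, le_refl s⟩ hrs
end

section
/- Let z₁, …, zₙ be points in the closed unit disc and let B(z) = ∏_{j=1}^n (z − z_j)/(1 − conj(z_j)·z) be the finite Blaschke product with these zeros. Then for every z in the closed unit disc, |B(z)| ≤ exp(−((1 − |z|²)/4) · Σ_{j=1}^n (1 − |z_j|)). -/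
lemma one_factor (a w : ℂ) (ha : ‖a‖ ≤ 1) (hw : ‖w‖ ≤ 1) :
    ‖(w - a) / (1 - (starRingEnd ℂ) a * w)‖ ≤
      Real.exp (-((1 - ‖w‖ ^ 2) / 4) * (1 - ‖a‖)) := by
  by_cases hd : (1 - (starRingEnd ℂ) a * w) = 0
  · simp [hd]
    positivity
  · set t : ℝ := -((1 - ‖w‖ ^ 2) / 4) * (1 - ‖a‖) with ht
    have hx0 : (0:ℝ) ≤ ‖w‖ := norm_nonneg _
    have hy0 : (0:ℝ) ≤ ‖a‖ := norm_nonneg _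
    have hD0 : (0:ℝ) < ‖1 - (starRingEnd ℂ) a * w‖ := norm_pos_iff.mpr hd
    -- key identity
    have key : ‖1 - (starRingEnd ℂ) a * w‖ ^ 2 - ‖w - a‖ ^ 2
        = (1 - ‖w‖ ^ 2) * (1 - ‖a‖ ^ 2) := by
      have h1 : ‖1 - (starRingEnd ℂ) a * w‖ ^ 2 = Complex.normSq (1 - (starRingEnd ℂ) a * w) := by
        rw [Complex.sq_norm]
      have h2 : ‖w - a‖ ^ 2 = Complex.normSq (w - a) := by
        rw [Complex.sq_norm]
      have h3 : ‖w‖ ^ 2 = Complex.normSq w := by rw [Complex.sq_norm]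
      have h4 : ‖a‖ ^ 2 = Complex.normSq a := by rw [Complex.sq_norm]
      rw [h1, h2, h3, h4]
      simp only [Complex.normSq_apply, Complex.sub_re, Complex.sub_im, Complex.mul_re,
        Complex.mul_im, Complex.conj_re, Complex.conj_im, Complex.one_re, Complex.one_im]
      ring
    -- bound on denominator
    have hDle : ‖1 - (starRingEnd ℂ) a * w‖ ≤ 1 + ‖a‖ := by
      calc ‖1 - (starRingEnd ℂ) a * w‖ ≤ ‖(1:ℂ)‖ + ‖(starRingEnd ℂ) a * w‖ := norm_sub_le _ _
        _ = 1 + ‖a‖ * ‖w‖ := by simp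
        _ ≤ 1 + ‖a‖ := by nlinarith
    have hexp : 1 + (2 * t) ≤ Real.exp (2 * t) := by
      have := Real.add_one_le_exp (2 * t); linarith
    -- squared inequality
    have hsq : ‖(w - a) / (1 - (starRingEnd ℂ) a * w)‖ ^ 2 ≤ Real.exp t ^ 2 := by
      rw [norm_div, div_pow]
      rw [div_le_iff₀ (by positivity)]
      have hexp2 : Real.exp t ^ 2 = Real.exp (2 * t) := by
        rw [← Real.exp_nat_mul]; norm_num [mul_comm]
      rw [hexp2]
      have h1 : 1 + 2 * t ≤ Real.exp (2 * t) := hexp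
      have h2t : 2 * t = -((1 - ‖w‖ ^ 2) / 2) * (1 - ‖a‖) := by rw [ht]; ring
      have hD2 : ‖1 - (starRingEnd ℂ) a * w‖ ^ 2 ≤ (1 + ‖a‖) ^ 2 := by nlinarith
      have hB : ‖1 - (starRingEnd ℂ) a * w‖ ^ 2 ≤ 2 * (1 + ‖a‖) := by nlinarith
      have hx2 : ‖w‖ ^ 2 ≤ 1 := by nlinarith
      have hA : (0:ℝ) ≤ (1 - ‖w‖ ^ 2) * (1 - ‖a‖) :=
        mul_nonneg (by linarith) (by linarith)
      have h5 : (0:ℝ) ≤ (1 - ‖w‖ ^ 2) * (1 - ‖a‖) * (2 * (1 + ‖a‖) - ‖1 - (starRingEnd ℂ) a * w‖ ^ 2) :=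
        mul_nonneg hA (by linarith)
      have h6 : (0:ℝ) ≤ (Real.exp (2 * t) - (1 + 2 * t)) * ‖1 - (starRingEnd ℂ) a * w‖ ^ 2 :=
        mul_nonneg (by linarith) (by positivity)
      nlinarith [h5, h6, key, h2t]
    nlinarith [norm_nonneg ((w - a) / (1 - (starRingEnd ℂ) a * w)), Real.exp_pos t]

theorem stmt4 (n : ℕ) (z : Fin n → ℂ) (hz : ∀ j, ‖z j‖ ≤ 1) (w : ℂ) (hw : ‖w‖ ≤ 1) :
    ‖∏ j, (w - z j) / (1 - (starRingEnd ℂ) (z j) * w)‖ ≤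
      Real.exp (-((1 - ‖w‖ ^ 2) / 4) * ∑ j, (1 - ‖z j‖)) := by
  calc ‖∏ j, (w - z j) / (1 - (starRingEnd ℂ) (z j) * w)‖
      = ∏ j, ‖(w - z j) / (1 - (starRingEnd ℂ) (z j) * w)‖ := norm_prod _ _
    _ ≤ ∏ j, Real.exp (-((1 - ‖w‖ ^ 2) / 4) * (1 - ‖z j‖)) :=
        Finset.prod_le_prod (fun j _ => norm_nonneg _) (fun j _ => one_factor (z j) w (hz j) hw)
    _ = Real.exp (∑ j, -((1 - ‖w‖ ^ 2) / 4) * (1 - ‖z j‖)) := (Real.exp_sum _ _).symm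
    _ = Real.exp (-((1 - ‖w‖ ^ 2) / 4) * ∑ j, (1 - ‖z j‖)) := by rw [Finset.mul_sum]
end

section
/- Let q be a bounded holomorphic function on the unit disc with ‖q‖_∞ ≤ 1, and let z₁, …, zₙ be points in the open unit disc. Define B_q(z) = q(z)·∏_{j=1}^n (z − z_j)/(1 − conj(z_j)z). Then for 0 < R < 1, sup_{|z| ≤ R} |B_q(z)| ≥ |q(0)| · ∏_{j=1}^n max{R, |z_j|}. -/
open Complex Metric

theorem stmt6 (q : ℂ → ℂ) (hq : DifferentiableOn ℂ q (Metric.ball 0 1))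
    (hqb : ∀ z ∈ Metric.ball (0 : ℂ) 1, ‖q z‖ ≤ 1)
    (n : ℕ) (z : Fin n → ℂ) (hz : ∀ j, ‖z j‖ < 1)
    (R : ℝ) (hR0 : 0 < R) (hR1 : R < 1) :
    ‖q 0‖ * ∏ j, max R ‖z j‖ ≤
      sSup ((fun w => ‖q w * ∏ j, (w - z j) / (1 - (starRingEnd ℂ) (z j) * w)‖) ''
        Metric.closedBall 0 R) := by
  set c : Fin n → ℂ := fun j => (starRingEnd ℂ) (z j) with hc
  have hcnorm : ∀ j, ‖c j‖ = ‖z j‖ := fun j => by simp [hc]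
  have hRne : (R : ℂ) ≠ 0 := by exact_mod_cast hR0.ne'
  have hden : ∀ j, ∀ w ∈ ball (0 : ℂ) 1, (1 - c j * w) ≠ 0 := by
    intro j w hw h
    have h1 : ‖c j * w‖ < 1 := by
      rw [norm_mul, hcnorm]
      calc ‖z j‖ * ‖w‖ ≤ 1 * ‖w‖ := by
            exact mul_le_mul_of_nonneg_right (hz j).le (norm_nonneg _)
        _ < 1 := by simpa using mem_ball_zero_iff.mp hw
    have : c j * w = 1 := by linear_combination -h
    rw [this] at h1; simp at h1
  set F : Fin n → ℂ → ℂ := fun j w =>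
    if ‖z j‖ < R then ((R : ℂ) ^ 2 - c j * w) / ((R : ℂ) * (1 - c j * w))
    else (w - z j) / (1 - c j * w) with hF
  set g : ℂ → ℂ := fun w => q w * ∏ j, F j w with hg
  set S := ((fun w => ‖q w * ∏ j, (w - z j) / (1 - (starRingEnd ℂ) (z j) * w)‖) ''
        Metric.closedBall (0 : ℂ) R) with hS
  have hsub : closedBall (0 : ℂ) R ⊆ ball 0 1 := closedBall_subset_ball hR1
  -- continuity of the original function on the closed ball
  have hBcont : ContinuousOn (fun w => q w * ∏ j, (w - z j) / (1 - c j * w))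
      (closedBall (0 : ℂ) R) := by
    apply ContinuousOn.mul (hq.continuousOn.mono hsub)
    apply continuousOn_finset_prod
    intro j _
    exact ContinuousOn.div (by fun_prop) (by fun_prop)
      (fun w hw => hden j w (hsub hw))
  have hbdd : BddAbove S := by
    rw [hS]
    exact ((isCompact_closedBall 0 R).image_of_continuousOn hBcont.norm).bddAbove
  -- differentiability of g on the unit ball
  have hgdiff : DifferentiableOn ℂ g (ball (0 : ℂ) 1) := by
    apply DifferentiableOn.mul hq
    apply DifferentiableOn.fun_finsetProd
    intro j _
    rw [hF]
    by_cases hj : ‖z j‖ < R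
    · simp only [if_pos hj]
      exact DifferentiableOn.div (by fun_prop) (by fun_prop)
        (fun w hw => mul_ne_zero hRne (hden j w hw))
    · simp only [if_neg hj]
      exact DifferentiableOn.div (by fun_prop) (by fun_prop)
        (fun w hw => hden j w hw)
  -- on the sphere of radius R, ‖g‖ agrees with the original function's norm
  have hsphere : ∀ w ∈ sphere (0 : ℂ) R, ‖g w‖ ≤ sSup S := by
    intro w hw
    have hwR : ‖w‖ = R := by simpa using mem_sphere_zero_iff_norm.mp hw
    have hFeq : ∀ j, ‖F j w‖ = ‖(w - z j) / (1 - c j * w)‖ := by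
      intro j
      rw [hF]
      by_cases hj : ‖z j‖ < R
      · simp only [if_pos hj]
        have hww : w * (starRingEnd ℂ) w = ((R : ℂ)) ^ 2 := by
          rw [Complex.mul_conj]
          norm_cast
          rw [Complex.normSq_eq_norm_sq, hwR]
        have hnum : (R : ℂ) ^ 2 - c j * w = w * (starRingEnd ℂ) (w - z j) := by
          simp only [hc, map_sub]
          linear_combination -hww
        rw [norm_div, norm_div, hnum, norm_mul, hwR, RCLike.norm_conj, norm_mul,
          Complex.norm_real, Real.norm_eq_abs, abs_of_pos hR0,
          mul_div_mul_left _ _ hR0.ne']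
      · simp only [if_neg hj]
    have hgw : ‖g w‖ = ‖q w * ∏ j, (w - z j) / (1 - c j * w)‖ := by
      rw [hg]
      simp only [norm_mul, norm_prod]
      congr 1
      exact Finset.prod_congr rfl (fun j _ => hFeq j)
    rw [hgw]
    exact le_csSup hbdd ⟨w, sphere_subset_closedBall hw, rfl⟩
  -- maximum modulus principle
  have hmax : ‖g 0‖ ≤ sSup S := by
    apply Complex.norm_le_of_forall_mem_frontier_norm_le (U := ball (0 : ℂ) R)
      isBounded_ball
    · refine ⟨hgdiff.mono (ball_subset_ball hR1.le), ?_⟩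
      rw [closure_ball (0 : ℂ) hR0.ne']
      exact hgdiff.continuousOn.mono hsub
    · intro w hw
      rw [frontier_ball (0 : ℂ) hR0.ne'] at hw
      exact hsphere w hw
    · rw [closure_ball (0 : ℂ) hR0.ne']
      exact mem_closedBall_self hR0.le
  -- compute ‖g 0‖
  have hg0 : ‖g 0‖ = ‖q 0‖ * ∏ j, max R ‖z j‖ := by
    rw [hg]
    simp only [norm_mul, norm_prod]
    congr 1
    apply Finset.prod_congr rfl
    intro j _
    rw [hF]
    by_cases hj : ‖z j‖ < R
    · simp only [if_pos hj, mul_zero, sub_zero]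
      rw [max_eq_left hj.le]
      rw [show ((R:ℂ))^2 / ((R:ℂ) * 1) = (R:ℂ) by field_simp]
      simp [Complex.norm_real, abs_of_pos hR0]
    · simp only [if_neg hj, mul_zero, sub_zero, zero_sub, div_one, norm_neg]
      rw [max_eq_right (not_lt.mp hj)]
  rw [← hg0]
  exact hmax
end

section
/- Let E ⊂ 𝔻 be compact with infinitely many points. Define V_n(E) = sup_{(z₁,…,zₙ) ∈ Eⁿ} ∏_{1≤j<k≤n} d(z_j,z_k), where d is the pseudo-hyperbolic distance, and M_n(E) = inf over extremal configurations Z_n (those attaining V_n(E)) of sup_{z∈E} ∏_{j=1}^n d(z, z_j). Then M_n(E) ≤ V_n(E)^(1/n) for every n ≥ 1. -/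
/-- pseudo-hyperbolic distance -/
noncomputable def phd (z w : ℂ) : ℝ := ‖(z - w) / (1 - (starRingEnd ℂ) w * z)‖

/-- Vandermonde/Fekete product of a tuple for the pseudo-hyperbolic metric -/
noncomputable def Vprod {n : ℕ} (z : Fin n → ℂ) : ℝ :=
  ∏ j : Fin n, ∏ k ∈ Finset.univ.filter (fun k => j < k), phd (z j) (z k)

/-- n-th Fekete-type quantity of a set E -/
noncomputable def Vn (E : Set ℂ) (n : ℕ) : ℝ :=
  sSup {t : ℝ | ∃ z : Fin n → ℂ, (∀ j, z j ∈ E) ∧ t = Vprod z}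

/-- `M(Z_n) = sup_{z ∈ E} ∏_j d(z, z_j)` -/
noncomputable def Mconf (E : Set ℂ) {n : ℕ} (Z : Fin n → ℂ) : ℝ :=
  sSup {t : ℝ | ∃ z ∈ E, t = ∏ j : Fin n, phd z (Z j)}

/-- `M_n(E)`: infimum of `M(Z_n)` over extremal (Fekete) configurations -/
noncomputable def Mn (E : Set ℂ) (n : ℕ) : ℝ :=
  sInf {t : ℝ | ∃ Z : Fin n → ℂ, (∀ j, Z j ∈ E) ∧ Vprod Z = Vn E n ∧ t = Mconf E Z}

lemma phd_nonneg (z w : ℂ) : 0 ≤ phd z w := norm_nonneg _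

lemma one_sub_conj_ne {z w : ℂ} (hz : ‖z‖ < 1) (hw : ‖w‖ < 1) :
    (1 : ℂ) - (starRingEnd ℂ) w * z ≠ 0 := by
  intro h
  have h1 : (starRingEnd ℂ) w * z = 1 := by linear_combination -h
  have : ‖(starRingEnd ℂ) w * z‖ < 1 := by
    rw [norm_mul, RCLike.norm_conj]
    nlinarith [norm_nonneg z, norm_nonneg w]
  rw [h1] at this; simp at this

lemma phd_comm (z w : ℂ) : phd z w = phd w z := by
  unfold phd
  rw [norm_div, norm_div, norm_sub_rev]
  congr 1
  rw [← RCLike.norm_conj (1 - (starRingEnd ℂ) w * z)]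
  congr 1
  simp [map_sub, map_mul, mul_comm]

lemma normsq_key (z w : ℂ) :
    Complex.normSq (1 - (starRingEnd ℂ) w * z) - Complex.normSq (z - w)
      = (1 - Complex.normSq w) * (1 - Complex.normSq z) := by
  simp [Complex.normSq_apply, Complex.sub_re, Complex.sub_im, Complex.mul_re, Complex.mul_im]
  ring

lemma normsq_eq (x : ℂ) : ‖x‖ ^ 2 = Complex.normSq x := by
  rw [Complex.sq_norm]

lemma phd_le_one {z w : ℂ} (hz : ‖z‖ < 1) (hw : ‖w‖ < 1) : phd z w ≤ 1 := by
  unfold phd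
  rw [norm_div, div_le_one (norm_pos_iff.mpr (one_sub_conj_ne hz hw))]
  have h2 : ‖z - w‖ ^ 2 ≤ ‖1 - (starRingEnd ℂ) w * z‖ ^ 2 := by
    rw [normsq_eq, normsq_eq]
    have hk := normsq_key z w
    have hz2 : Complex.normSq z < 1 := by nlinarith [normsq_eq z, sq_nonneg ‖z‖, norm_nonneg z]
    have hw2 : Complex.normSq w < 1 := by nlinarith [normsq_eq w, sq_nonneg ‖w‖, norm_nonneg w]
    nlinarith
  nlinarith [norm_nonneg (z - w), norm_nonneg (1 - (starRingEnd ℂ) w * z)]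

lemma phd_pos {z w : ℂ} (hz : ‖z‖ < 1) (hw : ‖w‖ < 1) (hzw : z ≠ w) : 0 < phd z w :=
  norm_pos_iff.mpr (div_ne_zero (sub_ne_zero.mpr hzw) (one_sub_conj_ne hz hw))

lemma vprod_pairs {n : ℕ} (w : Fin n → ℂ) :
    Vprod w = ∏ p ∈ (Finset.univ ×ˢ Finset.univ).filter
        (fun p : Fin n × Fin n => p.1 < p.2), phd (w p.1) (w p.2) := by
  rw [Finset.prod_filter,
    Finset.prod_product' (f := fun j k : Fin n => if j < k then phd (w j) (w k) else 1)]
  unfold Vprod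
  exact Finset.prod_congr rfl fun j _ => (Finset.prod_filter _ _)

lemma double_offdiag {n : ℕ} (f : Fin n → Fin n → ℝ) :
    (∏ k : Fin n, ∏ j ∈ Finset.univ.erase k, f k j)
      = ∏ p ∈ (Finset.univ ×ˢ Finset.univ).filter
          (fun p : Fin n × Fin n => p.1 ≠ p.2), f p.1 p.2 := by
  rw [Finset.prod_filter,
    Finset.prod_product' (f := fun j k : Fin n => if j ≠ k then f j k else 1)]
  refine Finset.prod_congr rfl fun j _ => ?_
  rw [← Finset.prod_filter]
  refine Finset.prod_congr ?_ fun k _ => rfl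
  ext k; simp [eq_comm, ne_comm, Ne]

lemma swap_pairs {n : ℕ} (f : Fin n → Fin n → ℝ) :
    (∏ p ∈ (Finset.univ ×ˢ Finset.univ).filter
        (fun p : Fin n × Fin n => p.2 < p.1), f p.1 p.2)
      = ∏ p ∈ (Finset.univ ×ˢ Finset.univ).filter
          (fun p : Fin n × Fin n => p.1 < p.2), f p.2 p.1 := by
  refine Finset.prod_nbij' Prod.swap Prod.swap ?_ ?_ ?_ ?_ ?_ <;>
    simp [Finset.mem_filter]

lemma vprod_update {n : ℕ} (Z : Fin n → ℂ) (k : Fin n) (x : ℂ) :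
    Vprod (Function.update Z k x)
      = (∏ j ∈ Finset.univ.erase k, phd x (Z j)) *
        ∏ p ∈ ((Finset.univ ×ˢ Finset.univ).filter
            (fun p : Fin n × Fin n => p.1 < p.2)).filter
            (fun p => ¬(p.1 = k ∨ p.2 = k)), phd (Z p.1) (Z p.2) := by
  set w := Function.update Z k x with hw
  rw [vprod_pairs,
    ← Finset.prod_filter_mul_prod_filter_not _ (fun p : Fin n × Fin n => p.1 = k ∨ p.2 = k)]
  congr 1
  · rw [← Finset.prod_filter_mul_prod_filter_not _ (fun p : Fin n × Fin n => p.1 = k)]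
    have e1 : ∏ p ∈ (((Finset.univ ×ˢ Finset.univ).filter
          (fun p : Fin n × Fin n => p.1 < p.2)).filter
          (fun p => p.1 = k ∨ p.2 = k)).filter (fun p => p.1 = k),
        phd (w p.1) (w p.2) = ∏ j ∈ Finset.univ.filter (fun j => k < j), phd x (Z j) := by
      refine Finset.prod_nbij' (fun p => p.2) (fun j => (k, j)) ?_ ?_ ?_ ?_ ?_
      · intro p hp
        simp only [Finset.mem_filter, Finset.mem_product, Finset.mem_univ, true_and,
          and_true] at hp ⊢
        exact hp.2 ▸ hp.1.1
      · intro j hj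
        simp only [Finset.mem_filter, Finset.mem_univ, true_and] at hj ⊢
        simp [hj]
      · intro p hp
        simp only [Finset.mem_filter, Finset.mem_product, Finset.mem_univ, true_and,
          and_true] at hp
        have h1 : p.1 = k := hp.2
        rw [← h1]
      · intro j hj; rfl
      · intro p hp
        simp only [Finset.mem_filter, Finset.mem_product, Finset.mem_univ, true_and,
          and_true] at hp
        have h1 : p.1 = k := hp.2
        have h2 : p.2 ≠ k := fun h => absurd hp.1.1 (by rw [h1, h]; exact lt_irrefl k)
        rw [hw, h1, Function.update_self, Function.update_of_ne h2]
    have e2 : ∏ p ∈ (((Finset.univ ×ˢ Finset.univ).filter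
          (fun p : Fin n × Fin n => p.1 < p.2)).filter
          (fun p => p.1 = k ∨ p.2 = k)).filter (fun p => ¬ p.1 = k),
        phd (w p.1) (w p.2) = ∏ j ∈ Finset.univ.filter (fun j => j < k), phd x (Z j) := by
      refine Finset.prod_nbij' (fun p => p.1) (fun j => (j, k)) ?_ ?_ ?_ ?_ ?_
      · intro p hp
        simp only [Finset.mem_filter, Finset.mem_product, Finset.mem_univ, true_and,
          and_true] at hp ⊢
        have h2 : p.2 = k := hp.1.2.resolve_left hp.2
        exact h2 ▸ hp.1.1
      · intro j hj
        simp only [Finset.mem_filter, Finset.mem_univ, true_and] at hj ⊢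
        simp [hj, ne_of_lt hj]
      · intro p hp
        simp only [Finset.mem_filter, Finset.mem_product, Finset.mem_univ, true_and,
          and_true] at hp
        have h2 : p.2 = k := hp.1.2.resolve_left hp.2
        rw [← h2]
      · intro j hj; rfl
      · intro p hp
        simp only [Finset.mem_filter, Finset.mem_product, Finset.mem_univ, true_and,
          and_true] at hp
        have h2 : p.2 = k := hp.1.2.resolve_left hp.2
        rw [hw, h2, Function.update_self, Function.update_of_ne hp.2, phd_comm]
    rw [e1, e2]
    rw [← Finset.prod_union]
    · refine Finset.prod_congr ?_ fun j _ => rfl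
      ext j
      simp only [Finset.mem_union, Finset.mem_filter, Finset.mem_erase, Finset.mem_univ,
        true_and, and_true]
      constructor
      · rintro (h | h) <;> [exact h.ne'; exact h.ne]
      · intro h; rcases lt_or_gt_of_ne h with h1 | h1
        · exact Or.inr h1
        · exact Or.inl h1
    · rw [Finset.disjoint_left]
      intro j hj1 hj2
      simp only [Finset.mem_filter] at hj1 hj2
      exact absurd (hj1.2.trans hj2.2) (lt_irrefl k)
  · refine Finset.prod_congr rfl fun p hp => ?_
    simp only [Finset.mem_filter, not_or] at hp
    rw [hw, Function.update_of_ne hp.2.1, Function.update_of_ne hp.2.2]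

lemma vprod_continuousOn {n : ℕ} (E : Set ℂ) (hE : E ⊆ Metric.ball 0 1) :
    ContinuousOn (Vprod (n := n)) (Set.pi Set.univ (fun _ : Fin n => E)) := by
  unfold Vprod
  apply continuousOn_finset_prod
  intro j _
  apply continuousOn_finset_prod
  intro k _
  unfold phd
  apply ContinuousOn.norm
  apply ContinuousOn.div
  · exact ((continuous_apply j).sub (continuous_apply k)).continuousOn
  · exact (continuous_const.sub
      ((Complex.continuous_conj.comp (continuous_apply k)).mul (continuous_apply j))).continuousOn
  · intro w hw
    have h1 : w j ∈ Metric.ball (0:ℂ) 1 := hE (hw j (Set.mem_univ j))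
    have h2 : w k ∈ Metric.ball (0:ℂ) 1 := hE (hw k (Set.mem_univ k))
    simp only [Metric.mem_ball, Complex.dist_eq, sub_zero] at h1 h2
    exact one_sub_conj_ne (by simpa using h1) (by simpa using h2)

lemma exists_fekete (n : ℕ) (E : Set ℂ) (hEc : IsCompact E) (hne : E.Nonempty)
    (hE : E ⊆ Metric.ball 0 1) :
    ∃ Z : Fin n → ℂ, (∀ j, Z j ∈ E) ∧ Vprod Z = Vn E n := by
  set K : Set (Fin n → ℂ) := Set.pi Set.univ (fun _ : Fin n => E) with hK
  have hKc : IsCompact K := isCompact_univ_pi (fun _ => hEc)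
  obtain ⟨e, he⟩ := hne
  have hKne : K.Nonempty := ⟨fun _ => e, fun _ _ => he⟩
  have himg : IsCompact (Vprod '' K) := hKc.image_of_continuousOn (vprod_continuousOn E hE)
  have hset : {t : ℝ | ∃ z : Fin n → ℂ, (∀ j, z j ∈ E) ∧ t = Vprod z} = Vprod '' K := by
    ext t
    constructor
    · rintro ⟨z, hz, rfl⟩; exact ⟨z, fun j _ => hz j, rfl⟩
    · rintro ⟨z, hz, rfl⟩; exact ⟨z, fun j => hz j (Set.mem_univ j), rfl⟩
  have hmem : sSup (Vprod '' K) ∈ Vprod '' K := himg.sSup_mem (hKne.image _)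
  rw [Vn, hset]
  obtain ⟨Z, hZ, hZv⟩ := hmem
  exact ⟨Z, fun j => hZ j (Set.mem_univ j), hZv⟩

lemma ball_norm {E : Set ℂ} (hE : E ⊆ Metric.ball 0 1) {z : ℂ} (hz : z ∈ E) : ‖z‖ < 1 := by
  have := hE hz
  simpa [Metric.mem_ball, Complex.dist_eq] using this

lemma vprod_nonneg {n : ℕ} (z : Fin n → ℂ) : 0 ≤ Vprod z :=
  Finset.prod_nonneg fun j _ => Finset.prod_nonneg fun k _ => phd_nonneg _ _

lemma vprod_le_one {n : ℕ} {E : Set ℂ} (hE : E ⊆ Metric.ball 0 1) {z : Fin n → ℂ}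
    (hz : ∀ j, z j ∈ E) : Vprod z ≤ 1 := by
  apply Finset.prod_le_one (fun j _ => Finset.prod_nonneg fun k _ => phd_nonneg _ _)
  intro j _
  apply Finset.prod_le_one (fun k _ => phd_nonneg _ _)
  intro k _
  exact phd_le_one (ball_norm hE (hz j)) (ball_norm hE (hz k))

theorem stmt10 (E : Set ℂ) (hEc : IsCompact E) (hEi : E.Infinite)
    (hE : E ⊆ Metric.ball 0 1) :
    ∀ n : ℕ, 1 ≤ n → Mn E n ≤ (Vn E n) ^ ((1 : ℝ) / n) := by
  intro n hn
  have hne : E.Nonempty := hEi.nonempty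
  obtain ⟨e, he⟩ := hne
  -- bounded above
  have hbdd : BddAbove {t : ℝ | ∃ z : Fin n → ℂ, (∀ j, z j ∈ E) ∧ t = Vprod z} := by
    refine ⟨1, ?_⟩
    rintro t ⟨z, hz, rfl⟩
    exact vprod_le_one hE hz
  -- a configuration of distinct points
  have : Infinite ↥E := hEi.to_subtype
  set emb := Infinite.natEmbedding ↥E with hemb
  set Z0 : Fin n → ℂ := fun j => (emb (j : ℕ) : ℂ) with hZ0
  have hZ0E : ∀ j, Z0 j ∈ E := fun j => (emb (j : ℕ)).2
  have hZ0inj : Function.Injective Z0 := by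
    intro a b h
    have : emb (a : ℕ) = emb (b : ℕ) := Subtype.ext h
    exact Fin.val_injective (emb.injective this)
  have hVpos : 0 < Vprod Z0 := by
    apply Finset.prod_pos
    intro j _
    apply Finset.prod_pos
    intro k hk
    simp only [Finset.mem_filter] at hk
    exact phd_pos (ball_norm hE (hZ0E j)) (ball_norm hE (hZ0E k))
      (fun h => absurd (hZ0inj h) (ne_of_lt hk.2))
  have hVnpos : 0 < Vn E n :=
    lt_of_lt_of_le hVpos (le_csSup hbdd (show Vprod Z0 ∈
      {t : ℝ | ∃ z : Fin n → ℂ, (∀ j, z j ∈ E) ∧ t = Vprod z} from ⟨Z0, hZ0E, rfl⟩))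
  have hVnle1 : Vn E n ≤ 1 := by
    apply csSup_le (show {t : ℝ | ∃ z : Fin n → ℂ, (∀ j, z j ∈ E) ∧ t = Vprod z}.Nonempty
      from ⟨Vprod Z0, Z0, hZ0E, rfl⟩)
    rintro t ⟨z, hz, rfl⟩
    exact vprod_le_one hE hz
  -- Fekete configuration
  obtain ⟨Z, hZE, hZV⟩ := exists_fekete n E hEc ⟨e, he⟩ hE
  have hZb : ∀ j, ‖Z j‖ < 1 := fun j => ball_norm hE (hZE j)
  -- rest products R k
  set R : Fin n → ℝ := fun k => ∏ p ∈ ((Finset.univ ×ˢ Finset.univ).filter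
      (fun p : Fin n × Fin n => p.1 < p.2)).filter
      (fun p => ¬(p.1 = k ∨ p.2 = k)), phd (Z p.1) (Z p.2) with hR
  have hdecomp : ∀ k : Fin n, (∏ j ∈ Finset.univ.erase k, phd (Z k) (Z j)) * R k = Vn E n := by
    intro k
    have := vprod_update Z k (Z k)
    rw [Function.update_eq_self] at this
    rw [← hZV, this]
  have hRnonneg : ∀ k, 0 ≤ R k := fun k => Finset.prod_nonneg fun p _ => phd_nonneg _ _
  have hMnonneg : ∀ k, 0 ≤ ∏ j ∈ Finset.univ.erase k, phd (Z k) (Z j) :=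
    fun k => Finset.prod_nonneg fun j _ => phd_nonneg _ _
  have hRpos : ∀ k, 0 < R k := by
    intro k
    rcases lt_or_eq_of_le (hRnonneg k) with h | h
    · exact h
    · exfalso
      have := hdecomp k
      rw [← h, mul_zero] at this
      exact absurd this.symm (ne_of_gt hVnpos)
  -- key inequality for each z ∈ E and k
  have hkey : ∀ z ∈ E, ∀ k : Fin n,
      (∏ j ∈ Finset.univ.erase k, phd z (Z j))
        ≤ ∏ j ∈ Finset.univ.erase k, phd (Z k) (Z j) := by
    intro z hz k
    have hup : Vprod (Function.update Z k z) ≤ Vn E n := by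
      apply le_csSup hbdd
      refine ⟨Function.update Z k z, fun j => ?_, rfl⟩
      rcases eq_or_ne j k with rfl | hne
      · rw [Function.update_self]; exact hz
      · rw [Function.update_of_ne hne]; exact hZE j
    rw [vprod_update, ← hdecomp k] at hup
    exact le_of_mul_le_mul_right hup (hRpos k)
  -- products over all points
  have hMk_prod : (∏ k : Fin n, ∏ j ∈ Finset.univ.erase k, phd (Z k) (Z j))
      = Vn E n * Vn E n := by
    rw [double_offdiag (fun k j => phd (Z k) (Z j))]
    rw [← Finset.prod_filter_mul_prod_filter_not _ (fun p : Fin n × Fin n => p.1 < p.2)]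
    have e1 : ((Finset.univ ×ˢ Finset.univ).filter
          (fun p : Fin n × Fin n => p.1 ≠ p.2)).filter (fun p => p.1 < p.2)
        = (Finset.univ ×ˢ Finset.univ).filter (fun p : Fin n × Fin n => p.1 < p.2) := by
      ext p
      simp only [Finset.mem_filter, Finset.mem_product, Finset.mem_univ, true_and, and_true,
        Ne]
      constructor
      · exact fun h => h.2
      · exact fun h => ⟨ne_of_lt h, h⟩
    have e2 : ((Finset.univ ×ˢ Finset.univ).filter
          (fun p : Fin n × Fin n => p.1 ≠ p.2)).filter (fun p => ¬ p.1 < p.2)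
        = (Finset.univ ×ˢ Finset.univ).filter (fun p : Fin n × Fin n => p.2 < p.1) := by
      ext p
      simp only [Finset.mem_filter, Finset.mem_product, Finset.mem_univ, true_and, and_true,
        Ne]
      constructor
      · rintro ⟨h1, h2⟩; exact (lt_or_gt_of_ne h1).resolve_left h2
      · exact fun h => ⟨(ne_of_lt h).symm, not_lt_of_gt h⟩
    rw [e1, e2, swap_pairs (fun a b => phd (Z a) (Z b))]
    rw [← vprod_pairs, hZV]
    congr 1
    rw [← hZV, vprod_pairs]
    exact Finset.prod_congr rfl fun p _ => phd_comm _ _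
  have hVnsq : Vn E n * Vn E n ≤ Vn E n := by nlinarith
  -- pointwise bound for products
  have hPbound : ∀ z ∈ E, (∏ j : Fin n, phd z (Z j)) ^ n ≤ Vn E n := by
    intro z hz
    have hP0 : 0 ≤ ∏ j : Fin n, phd z (Z j) :=
      Finset.prod_nonneg fun j _ => phd_nonneg _ _
    have hPk : ∀ k : Fin n, (∏ j : Fin n, phd z (Z j))
        ≤ ∏ j ∈ Finset.univ.erase k, phd (Z k) (Z j) := by
      intro k
      refine le_trans ?_ (hkey z hz k)
      rw [← Finset.mul_prod_erase Finset.univ _ (Finset.mem_univ k)]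
      have h1 : phd z (Z k) ≤ 1 := phd_le_one (ball_norm hE hz) (hZb k)
      nlinarith [Finset.prod_nonneg (fun j (_ : j ∈ Finset.univ.erase k) =>
        phd_nonneg z (Z j)), phd_nonneg z (Z k)]
    calc (∏ j : Fin n, phd z (Z j)) ^ n
        = ∏ _k : Fin n, ∏ j : Fin n, phd z (Z j) := by
          rw [Finset.prod_const, Finset.card_univ, Fintype.card_fin]
      _ ≤ ∏ k : Fin n, ∏ j ∈ Finset.univ.erase k, phd (Z k) (Z j) :=
          Finset.prod_le_prod (fun k _ => hP0) (fun k _ => hPk k)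
      _ = Vn E n * Vn E n := hMk_prod
      _ ≤ Vn E n := hVnsq
  -- Mconf E Z ≤ Vn ^ (1/n)
  have hnne : (n : ℝ) ≠ 0 := by positivity
  have hMconf : Mconf E Z ≤ Vn E n ^ ((1 : ℝ) / n) := by
    apply csSup_le (show {t : ℝ | ∃ z ∈ E, t = ∏ j : Fin n, phd z (Z j)}.Nonempty from
      ⟨∏ j : Fin n, phd e (Z j), e, he, rfl⟩)
    rintro t ⟨z, hz, rfl⟩
    have hP0 : 0 ≤ ∏ j : Fin n, phd z (Z j) :=
      Finset.prod_nonneg fun j _ => phd_nonneg _ _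
    have h1 : (∏ j : Fin n, phd z (Z j))
        = ((∏ j : Fin n, phd z (Z j)) ^ n) ^ ((1 : ℝ) / n) := by
      rw [← Real.rpow_natCast (∏ j : Fin n, phd z (Z j)) n, ← Real.rpow_mul hP0,
        mul_one_div, div_self hnne, Real.rpow_one]
    rw [h1]
    exact Real.rpow_le_rpow (pow_nonneg hP0 n) (hPbound z hz) (by positivity)
  -- Mn ≤ Mconf E Z
  have hMn : Mn E n ≤ Mconf E Z := by
    apply csInf_le
    · refine ⟨0, ?_⟩
      rintro t ⟨Z', hZ'E, _, rfl⟩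
      have hb : BddAbove {t : ℝ | ∃ z ∈ E, t = ∏ j : Fin n, phd z (Z' j)} := by
        refine ⟨1, ?_⟩
        rintro t ⟨z, hz, rfl⟩
        apply Finset.prod_le_one (fun j _ => phd_nonneg _ _)
        intro j _
        exact phd_le_one (ball_norm hE hz) (ball_norm hE (hZ'E j))
      refine le_trans ?_ (le_csSup hb ⟨e, he, rfl⟩)
      exact Finset.prod_nonneg fun j _ => phd_nonneg _ _
    · exact ⟨Z, hZE, hZV, rfl⟩
  exact hMn.trans hMconf
end

section
/- Let 0 < R < 1 and let α > 0 satisfy max{R^α, r^α} ≥ (R+r)/(1+Rr) for all r ∈ [0,1]. Let q be holomorphic on 𝔻 with ‖q‖_∞ ≤ 1 and q(0) ≠ 0, let z₁,…,zₙ ∈ 𝔻, and let B_q(z) = q(z)·∏_j (z−z_j)/(1−conj(z_j)z). Then for every k ∈ {1,…,n}: (1/R)·|q(0)|^{−α}·(sup_{|z|≤R}|B_q(z)|)^α ≥ sup_{|z|≤R} |B(Z_{n,k}, z)|, where B(Z_{n,k},·) is the Blaschke product over {z₁,…,zₙ}∖{z_k}. -/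
open Complex Metric Finset

lemma key_ineq (R r u t : ℝ) (hR0 : 0 < R) (hR1 : R < 1) (hr0 : 0 ≤ r) (hr1 : r < 1)
    (hu0 : 0 ≤ u) (huR : u ≤ R) (ht : -(r*u) ≤ t) :
    (1 + R*r)^2 * (u^2 + r^2 - 2*t) ≤ (R + r)^2 * (1 + r^2*u^2 - 2*t) := by
  have h1 : 0 ≤ t + r*u := by linarith
  have h2 : (R+r)*(1+r*u) - (1+R*r)*(u+r) = (R-u)*(1-r^2) := by ring
  have h3 : 0 ≤ (R-u)*(1-r^2) := mul_nonneg (by linarith) (by nlinarith)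
  have h4 : 0 ≤ (1+R*r)^2 - (R+r)^2 := by
    have : (1+R*r)^2 - (R+r)^2 = ((1-R)*(1-r))*((1+R)*(1+r)) := by ring
    rw [this]
    exact mul_nonneg (mul_nonneg (by linarith) (by linarith)) (by positivity)
  nlinarith [mul_nonneg h1 h4, mul_nonneg (by linarith [h2, h3] : (0:ℝ) ≤ (R+r)*(1+r*u) - (1+R*r)*(u+r)) (by positivity : (0:ℝ) ≤ (R+r)*(1+r*u) + (1+R*r)*(u+r))]


lemma mob (R : ℝ) (hR0 : 0 < R) (hR1 : R < 1) (z w : ℂ) (hz : ‖z‖ < 1) (hw : ‖w‖ ≤ R) :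
    ‖(w - z) / (1 - (starRingEnd ℂ) z * w)‖ ≤ (R + ‖z‖) / (1 + R * ‖z‖) := by
  set r := ‖z‖ with hr
  set u := ‖w‖ with hu
  have hr0 : 0 ≤ r := norm_nonneg z
  have hu0 : 0 ≤ u := norm_nonneg w
  set t := ((starRingEnd ℂ) z * w).re with htdef
  have hnc : ‖(starRingEnd ℂ) z * w‖ = r * u := by
    rw [norm_mul, RCLike.norm_conj]
  have ht : -(r*u) ≤ t := by
    have := neg_abs_le ((starRingEnd ℂ) z * w).re
    have habs := Complex.abs_re_le_norm ((starRingEnd ℂ) z * w)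
    rw [hnc] at habs
    have : |t| ≤ r * u := by rwa [htdef]
    linarith [neg_abs_le t, this]
  have hden_ne : (1 : ℂ) - (starRingEnd ℂ) z * w ≠ 0 := by
    intro h
    have h1 : (1:ℂ) = (starRingEnd ℂ) z * w := by linear_combination h
    have : (1:ℝ) = r * u := by
      calc (1:ℝ) = ‖(1:ℂ)‖ := by simp
      _ = r * u := by rw [h1, hnc]
    nlinarith
  have hdenpos : 0 < ‖(1:ℂ) - (starRingEnd ℂ) z * w‖ := norm_pos_iff.mpr hden_ne
  have hd2 : 0 < 1 + R * r := by positivity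
  rw [norm_div, div_le_div_iff₀ hdenpos hd2]
  -- reduce to squares
  have hnn1 : 0 ≤ ‖w - z‖ * (1 + R * r) := by positivity
  have hnn2 : 0 ≤ (R + r) * ‖(1:ℂ) - (starRingEnd ℂ) z * w‖ := by positivity
  rw [← pow_le_pow_iff_left₀ hnn1 hnn2 (two_ne_zero)]
  have hu2 : u^2 = w.re^2 + w.im^2 := by
    rw [hu, Complex.sq_norm, Complex.normSq_apply]; ring
  have hr2 : r^2 = z.re^2 + z.im^2 := by
    rw [hr, Complex.sq_norm, Complex.normSq_apply]; ring
  have htval : t = z.re*w.re + z.im*w.im := by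
    rw [htdef]; simp [Complex.mul_re, Complex.conj_re, Complex.conj_im]
  have e1 : ‖w - z‖^2 = u^2 + r^2 - 2*t := by
    rw [Complex.sq_norm, Complex.normSq_apply, hu2, hr2, htval]
    simp [Complex.sub_re, Complex.sub_im]; ring
  have e2 : ‖(1:ℂ) - (starRingEnd ℂ) z * w‖^2 = 1 - 2*t + r^2*u^2 := by
    rw [Complex.sq_norm, Complex.normSq_apply, htval, hr2, hu2]
    simp [Complex.sub_re, Complex.sub_im, Complex.mul_re, Complex.mul_im,
      Complex.conj_re, Complex.conj_im]; ring
  rw [mul_pow, mul_pow, e1, e2]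
  have hkey := key_ineq R r u t hR0 hR1 hr0 hz hu0 hw ht
  nlinarith [hkey]

lemma den_ne (z w : ℂ) (hz : ‖z‖ < 1) (hw : ‖w‖ < 1) :
    (1 : ℂ) - (starRingEnd ℂ) z * w ≠ 0 := by
  intro h
  have h1 : (1:ℂ) = (starRingEnd ℂ) z * w := by linear_combination h
  have : (1:ℝ) = ‖z‖ * ‖w‖ := by
    calc (1:ℝ) = ‖(1:ℂ)‖ := by simp
    _ = ‖z‖ * ‖w‖ := by rw [h1, norm_mul, RCLike.norm_conj]
  nlinarith [norm_nonneg z, norm_nonneg w]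

lemma jensen (R : ℝ) (hR0 : 0 < R) (hR1 : R < 1)
    (q : ℂ → ℂ) (hq : DifferentiableOn ℂ q (Metric.ball 0 1))
    (n : ℕ) (z : Fin n → ℂ) (hz : ∀ j, ‖z j‖ < 1) :
    ‖q 0‖ * ∏ j, max R ‖z j‖ ≤
      sSup ((fun w => ‖q w * ∏ j, (w - z j) / (1 - (starRingEnd ℂ) (z j) * w)‖) ''
        Metric.closedBall 0 R) := by
  set f : ℂ → ℂ := fun w => q w * ∏ j, (w - z j) / (1 - (starRingEnd ℂ) (z j) * w) with hf
  set S := sSup ((fun w => ‖f w‖) '' Metric.closedBall 0 R) with hS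
  have hsub : Metric.closedBall (0:ℂ) R ⊆ Metric.ball 0 1 :=
    Metric.closedBall_subset_ball hR1
  -- differentiability of f on ball 0 1
  have hdiffb : ∀ j : Fin n, DifferentiableOn ℂ
      (fun w => (w - z j) / (1 - (starRingEnd ℂ) (z j) * w)) (Metric.ball 0 1) := by
    intro j
    apply DifferentiableOn.div
    · exact (differentiable_id.sub_const _).differentiableOn
    · exact (differentiable_const _ |>.sub ((differentiable_const _).mul differentiable_id)).differentiableOn
    · intro w hw
      exact den_ne (z j) w (hz j) (by simpa using hw)
  have hfd : DifferentiableOn ℂ f (Metric.ball 0 1) :=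
    hq.mul (DifferentiableOn.fun_finset_prod fun j _ => hdiffb j)
  have hfc : ContinuousOn (fun w => ‖f w‖) (Metric.closedBall 0 R) :=
    (hfd.continuousOn.mono hsub).norm
  have hbdd : BddAbove ((fun w => ‖f w‖) '' Metric.closedBall 0 R) :=
    (isCompact_closedBall _ _).bddAbove_image hfc
  have hboundS : ∀ w ∈ Metric.closedBall (0:ℂ) R, ‖f w‖ ≤ S :=
    fun w hw => le_csSup hbdd ⟨w, hw, rfl⟩
  -- the auxiliary function g
  set c : Fin n → ℂ → ℂ := fun j w =>
    if ‖z j‖ < R then ((R:ℂ)^2 - (starRingEnd ℂ) (z j) * w) / ((R:ℂ) * (1 - (starRingEnd ℂ) (z j) * w))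
    else (w - z j) / (1 - (starRingEnd ℂ) (z j) * w) with hc
  set g : ℂ → ℂ := fun w => q w * ∏ j, c j w with hg
  have hgd : DifferentiableOn ℂ g (Metric.ball 0 1) := by
    apply hq.mul
    apply DifferentiableOn.fun_finset_prod
    intro j _
    by_cases h : ‖z j‖ < R
    · simp only [hc, if_pos h]
      apply DifferentiableOn.div
      · exact (differentiable_const _ |>.sub ((differentiable_const _).mul differentiable_id)).differentiableOn
      · exact ((differentiable_const _).mul (differentiable_const _ |>.sub ((differentiable_const _).mul differentiable_id))).differentiableOn
      · intro w hw
        apply mul_ne_zero (by exact_mod_cast hR0.ne')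
        exact den_ne (z j) w (hz j) (by simpa using hw)
    · simp only [hc, if_neg h]
      exact hdiffb j
  have hgcl : DiffContOnCl ℂ g (Metric.ball 0 R) := by
    refine ⟨hgd.mono (Metric.ball_subset_ball hR1.le), ?_⟩
    rw [closure_ball (0:ℂ) hR0.ne']
    exact (hgd.continuousOn).mono hsub
  -- norm of g equals norm of f on sphere
  have hsphere : ∀ w ∈ Metric.sphere (0:ℂ) R, ‖g w‖ = ‖f w‖ := by
    intro w hw
    have hwR : ‖w‖ = R := by simpa using hw
    simp only [hg, hf, norm_mul]
    congr 1
    rw [norm_prod, norm_prod]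
    apply Finset.prod_congr rfl
    intro j _
    by_cases h : ‖z j‖ < R
    · simp only [hc, if_pos h]
      have hnsq : (Complex.normSq w : ℂ) = (R:ℂ)^2 := by
        rw [Complex.normSq_eq_norm_sq, hwR]; push_cast; ring
      have hnum : (R:ℂ)^2 - (starRingEnd ℂ) (z j) * w = ((starRingEnd ℂ) w - (starRingEnd ℂ) (z j)) * w := by
        rw [← hnsq, ← Complex.mul_conj w]; ring
      rw [norm_div, norm_div, hnum, norm_mul, norm_mul]
      have : ‖(starRingEnd ℂ) w - (starRingEnd ℂ) (z j)‖ = ‖w - z j‖ := by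
        rw [← map_sub, RCLike.norm_conj]
      have hrr : ‖(R:ℂ)‖ = R := by simpa using abs_of_pos hR0
      rw [this, hwR, hrr, mul_comm R ‖1 - (starRingEnd ℂ) (z j) * w‖,
        mul_div_mul_right _ _ hR0.ne']
    · simp only [hc, if_neg h]
  have hg0 : ‖g 0‖ = ‖q 0‖ * ∏ j, max R ‖z j‖ := by
    simp only [hg, norm_mul]
    congr 1
    rw [norm_prod]
    apply Finset.prod_congr rfl
    intro j _
    by_cases h : ‖z j‖ < R
    · simp only [hc, if_pos h, mul_zero, sub_zero, mul_one]
      rw [norm_div, norm_pow]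
      have hrr : ‖(R:ℂ)‖ = R := by simpa using abs_of_pos hR0
      rw [hrr, max_eq_left h.le, sq, mul_div_assoc, div_self hR0.ne', mul_one]
    · simp only [hc, if_neg h, mul_zero, sub_zero, zero_sub, div_one, norm_neg]
      rw [max_eq_right (not_lt.mp h)]
  rw [← hg0]
  apply Complex.norm_le_of_forall_mem_frontier_norm_le isBounded_ball hgcl
  · intro w hw
    rw [frontier_ball (0:ℂ) hR0.ne'] at hw
    rw [hsphere w hw]
    exact hboundS w (Metric.sphere_subset_closedBall hw)
  · rw [closure_ball (0:ℂ) hR0.ne']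
    exact Metric.mem_closedBall_self hR0.le

theorem stmt17 (R α : ℝ) (hR0 : 0 < R) (hR1 : R < 1) (hα : 0 < α)
    (hαR : ∀ r : ℝ, 0 ≤ r → r ≤ 1 → (R + r) / (1 + R * r) ≤ max (R ^ α) (r ^ α))
    (q : ℂ → ℂ) (hq : DifferentiableOn ℂ q (Metric.ball 0 1))
    (hqb : ∀ ζ ∈ Metric.ball (0 : ℂ) 1, ‖q ζ‖ ≤ 1) (hq0 : q 0 ≠ 0)
    (n : ℕ) (z : Fin n → ℂ) (hz : ∀ j, ‖z j‖ < 1) (k : Fin n) :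
    sSup ((fun w => ‖∏ j ∈ Finset.univ.erase k,
          (w - z j) / (1 - (starRingEnd ℂ) (z j) * w)‖) '' Metric.closedBall 0 R) ≤
      (1 / R) * ‖q 0‖ ^ (-α) *
        (sSup ((fun w => ‖q w * ∏ j, (w - z j) / (1 - (starRingEnd ℂ) (z j) * w)‖) ''
          Metric.closedBall 0 R)) ^ α := by
  have hq0n : (0:ℝ) < ‖q 0‖ := norm_pos_iff.mpr hq0
  set M : Fin n → ℝ := fun j => max (R ^ α) (‖z j‖ ^ α) with hM
  have hMpos : ∀ j, 0 < M j := fun j =>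
    lt_of_lt_of_le (Real.rpow_pos_of_pos hR0 α) (le_max_left _ _)
  have hMb : ∀ j, (R + ‖z j‖) / (1 + R * ‖z j‖) ≤ M j := fun j =>
    hαR ‖z j‖ (norm_nonneg _) (hz j).le
  set P := ∏ j ∈ Finset.univ.erase k, M j with hP
  have hPpos : 0 < P := Finset.prod_pos fun j _ => hMpos j
  set S := sSup ((fun w => ‖q w * ∏ j, (w - z j) / (1 - (starRingEnd ℂ) (z j) * w)‖) ''
      Metric.closedBall 0 R) with hSdef
  have hjen : ‖q 0‖ * ∏ j, max R ‖z j‖ ≤ S := jensen R hR0 hR1 q hq n z hz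
  set Q := ∏ j, max R ‖z j‖ with hQ
  have hQpos : 0 < Q := Finset.prod_pos fun j _ => lt_of_lt_of_le hR0 (le_max_left _ _)
  -- Step 1: LHS ≤ P
  have hLHS : sSup ((fun w => ‖∏ j ∈ Finset.univ.erase k,
      (w - z j) / (1 - (starRingEnd ℂ) (z j) * w)‖) '' Metric.closedBall 0 R) ≤ P := by
    apply Real.sSup_le
    · rintro x ⟨w, hw, rfl⟩
      have hwR : ‖w‖ ≤ R := by simpa using hw
      dsimp only
      rw [norm_prod]
      apply Finset.prod_le_prod (fun j _ => norm_nonneg _)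
      intro j _
      exact le_trans (mob R hR0 hR1 (z j) w (hz j) hwR) (hMb j)
    · exact hPpos.le
  refine le_trans hLHS ?_
  -- Step 2: P ≤ RHS
  have hQα : Q ^ α = ∏ j, M j := by
    rw [hQ, ← Real.finset_prod_rpow _ _ (fun j _ => le_trans hR0.le (le_max_left _ _)) α]
    apply Finset.prod_congr rfl
    intro j _
    have hMj : M j = max (R ^ α) (‖z j‖ ^ α) := rfl
    rw [hMj]
    rcases le_total R ‖z j‖ with h | h
    · rw [max_eq_right h, max_eq_right (Real.rpow_le_rpow hR0.le h hα.le)]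
    · rw [max_eq_left h, max_eq_left (Real.rpow_le_rpow (norm_nonneg _) h hα.le)]
  have hstep : ‖q 0‖ ^ α * ∏ j, M j ≤ S ^ α := by
    rw [← hQα, ← Real.mul_rpow hq0n.le hQpos.le]
    exact Real.rpow_le_rpow (by positivity) hjen hα.le
  have hinv : ‖q 0‖ ^ (-α) * ‖q 0‖ ^ α = 1 := by
    rw [← Real.rpow_add hq0n]; simp
  have hMk : 1 ≤ (1 / R) * M k := by
    have h1 : R ≤ (R + ‖z k‖) / (1 + R * ‖z k‖) := by
      rw [le_div_iff₀ (by positivity)]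
      nlinarith [mul_nonneg (norm_nonneg (z k)) (by nlinarith : (0:ℝ) ≤ 1 - R^2)]
    have h2 : R ≤ M k := le_trans h1 (hMb k)
    calc (1:ℝ) = (1/R) * R := by field_simp
    _ ≤ (1/R) * M k := by
        apply mul_le_mul_of_nonneg_left h2 (by positivity)
  have hall : (1 / R) * ∏ j, M j = ((1/R) * M k) * P := by
    rw [hP, ← Finset.mul_prod_erase Finset.univ M (Finset.mem_univ k)]; ring
  calc P = 1 * P := (one_mul P).symm
  _ ≤ ((1/R) * M k) * P := mul_le_mul_of_nonneg_right hMk hPpos.le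
  _ = (1 / R) * ∏ j, M j := hall.symm
  _ = (1 / R) * (‖q 0‖ ^ (-α) * (‖q 0‖ ^ α * ∏ j, M j)) := by
      rw [← mul_assoc (‖q 0‖ ^ (-α)), hinv, one_mul]
  _ ≤ (1 / R) * (‖q 0‖ ^ (-α) * S ^ α) := by
      apply mul_le_mul_of_nonneg_left _ (by positivity)
      exact mul_le_mul_of_nonneg_left hstep (by positivity)
  _ = (1 / R) * ‖q 0‖ ^ (-α) * S ^ α := by ring
end
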